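/- For every complex w with −γ < Im w < 0, the products P(w) and P(w + iγ) converge and are nonzero, and the functional equation ( e^{i(π/2 + w)}/P(w) ) · ( e^{i(π/2 + w + iγ)}/P(w + iγ) ) = sin(w)/sin(w + iγ) holds. Equivalently, the dressed phase satisfies exp( φ(x₁, x₂) + φ(x₁ + iγ, x₂) ) = sin(x₁ − x₂)/sin(x₁ − x₂ + iγ), where w = x₁ − x₂ and e^{φ(x,z)} is defined through e^{−φ(x,z)} = e^{−i(π/2 + x − z)}·P(x − z). -/

import Mathlib

/-!
In the variables `q = e^{-2γ}` and `z = e^{2iw}` the product `P(w)` is a quotient of four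
`q`-Pochhammer symbols `(a; q²)_∞ = ∏ₖ (1 - a q^{2k})`, namely
`(qz; q²)_∞ (q²/z; q²)_∞ / ((q/z; q²)_∞ (q²z; q²)_∞)`. The shift `w ↦ w + iγ` is `z ↦ qz`, and in
`P(w) P(w + iγ)` all symbols cancel up to the first factor of `(qz; q²)_∞` and of `(1/z; q²)_∞`,
so `P(w) P(w + iγ) = (1 - qz)/(1 - 1/z)`. The functional equation is then an identity between
exponentials.
-/

/-- The `k`-th factor (`k = 1, 2, …` encoded as `k : ℕ` with value `k+1`) of the infinite
product `P(w)` appearing in the product representation of the dressed phase. -/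
noncomputable def phaseProdTerm (γ : ℝ) (w : ℂ) (k : ℕ) : ℂ :=
  ((1 - Complex.exp (-2 * ((2 * (k : ℂ) + 1) * (γ : ℂ) - Complex.I * w))) *
   (1 - Complex.exp (-2 * ((2 * (k : ℂ) + 2) * (γ : ℂ) + Complex.I * w)))) /
  ((1 - Complex.exp (-2 * ((2 * (k : ℂ) + 1) * (γ : ℂ) + Complex.I * w))) *
   (1 - Complex.exp (-2 * ((2 * (k : ℂ) + 2) * (γ : ℂ) - Complex.I * w))))

open Complex

section Norm

variable {R : Type*} [SeminormedRing R] {a b : R}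

lemma norm_mul_lt_one (ha : ‖a‖ < 1) (hb : ‖b‖ ≤ 1) : ‖a * b‖ < 1 :=
  (norm_mul_le a b).trans_lt (mul_lt_one_of_nonneg_of_lt_one_left (norm_nonneg a) ha hb)

lemma one_sub_ne_zero_of_norm_lt_one [NormOneClass R] (ha : ‖a‖ < 1) : 1 - a ≠ 0 :=
  sub_ne_zero.2 fun h ↦ by simp [← h] at ha

lemma norm_sq_lt_one (ha : ‖a‖ < 1) : ‖a ^ 2‖ < 1 :=
  pow_two a ▸ norm_mul_lt_one ha ha.le

lemma norm_sq_mul_lt_one (ha : ‖a‖ < 1) (hab : ‖a * b‖ < 1) : ‖a ^ 2 * b‖ < 1 := by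
  rw [pow_two, mul_assoc]
  exact norm_mul_lt_one ha hab.le

end Norm

lemma norm_exp_lt_one {u : ℂ} (hu : u.re < 0) : ‖exp u‖ < 1 := by
  rw [norm_exp]
  exact Real.exp_lt_one_iff.2 hu

noncomputable def qPochhammer (a ρ : ℂ) : ℂ := ∏' k : ℕ, (1 - a * ρ ^ k)

section qPochhammer

variable {a ρ : ℂ}

lemma summable_norm_neg_mul_pow (a : ℂ) (hρ : ‖ρ‖ < 1) :
    Summable fun k : ℕ ↦ ‖-(a * ρ ^ k)‖ := by
  simpa [norm_mul, norm_pow] using (summable_geometric_of_lt_one (norm_nonneg ρ) hρ).mul_left ‖a‖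

lemma hasProd_qPochhammer (a : ℂ) (hρ : ‖ρ‖ < 1) :
    HasProd (fun k : ℕ ↦ 1 - a * ρ ^ k) (qPochhammer a ρ) := by
  simpa [qPochhammer, sub_eq_add_neg] using
    (multipliable_one_add_of_summable (summable_norm_neg_mul_pow a hρ)).hasProd

lemma qPochhammer_ne_zero (ha : ‖a‖ < 1) (hρ : ‖ρ‖ < 1) : qPochhammer a ρ ≠ 0 := by
  have hfactor (k : ℕ) : 1 + -(a * ρ ^ k) ≠ 0 := by
    rw [← sub_eq_add_neg]
    refine one_sub_ne_zero_of_norm_lt_one (norm_mul_lt_one ha ?_)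
    exact norm_pow ρ k ▸ pow_le_one₀ (norm_nonneg ρ) hρ.le
  simpa [qPochhammer, sub_eq_add_neg] using
    tprod_one_add_ne_zero_of_summable hfactor (summable_norm_neg_mul_pow a hρ)

lemma qPochhammer_eq_one_sub_mul (a : ℂ) (hρ : ‖ρ‖ < 1) :
    qPochhammer a ρ = (1 - a) * qPochhammer (a * ρ) ρ := by
  rw [qPochhammer, tprod_eq_zero_mul' ((hasProd_qPochhammer (a * ρ) hρ).multipliable.congr
    fun k ↦ by ring)]
  simp only [pow_zero, mul_one, qPochhammer, pow_succ, mul_assoc, mul_comm ρ]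

end qPochhammer

noncomputable def phaseFactor (q z : ℂ) (k : ℕ) : ℂ :=
  (1 - q * z * (q ^ 2) ^ k) * (1 - q ^ 2 * z⁻¹ * (q ^ 2) ^ k) /
    ((1 - q * z⁻¹ * (q ^ 2) ^ k) * (1 - q ^ 2 * z * (q ^ 2) ^ k))

noncomputable def phaseProduct (q z : ℂ) : ℂ :=
  qPochhammer (q * z) (q ^ 2) * qPochhammer (q ^ 2 * z⁻¹) (q ^ 2) /
    (qPochhammer (q * z⁻¹) (q ^ 2) * qPochhammer (q ^ 2 * z) (q ^ 2))

lemma phaseProdTerm_eq_phaseFactor (γ : ℝ) (w : ℂ) :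
    phaseProdTerm γ w = phaseFactor (exp (-2 * γ)) (exp (2 * I * w)) := by
  ext k
  simp only [phaseProdTerm, phaseFactor, ← exp_neg, ← exp_nat_mul, ← exp_add]
  ring_nf

section phaseProduct

variable {q z : ℂ}

lemma hasProd_phaseFactor (hq : ‖q‖ < 1) (hqz : ‖q * z‖ < 1) (hqz' : ‖q * z⁻¹‖ < 1) :
    HasProd (phaseFactor q z) (phaseProduct q z) := by
  have hq2 := norm_sq_lt_one hq
  exact ((hasProd_qPochhammer _ hq2).mul (hasProd_qPochhammer _ hq2)).div₀
    ((hasProd_qPochhammer _ hq2).mul (hasProd_qPochhammer _ hq2))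
    (mul_ne_zero (qPochhammer_ne_zero hqz' hq2)
      (qPochhammer_ne_zero (norm_sq_mul_lt_one hq hqz) hq2))

lemma phaseProduct_ne_zero (hq : ‖q‖ < 1) (hqz : ‖q * z‖ < 1) (hqz' : ‖q * z⁻¹‖ < 1) :
    phaseProduct q z ≠ 0 := by
  have hq2 := norm_sq_lt_one hq
  exact div_ne_zero
    (mul_ne_zero (qPochhammer_ne_zero hqz hq2)
      (qPochhammer_ne_zero (norm_sq_mul_lt_one hq hqz') hq2))
    (mul_ne_zero (qPochhammer_ne_zero hqz' hq2)
      (qPochhammer_ne_zero (norm_sq_mul_lt_one hq hqz) hq2))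

lemma phaseProduct_mul_phaseProduct_mul_left (hq₀ : q ≠ 0) (hq : ‖q‖ < 1)
    (hqz : ‖q * z‖ < 1) (hz : ‖z⁻¹‖ < 1) :
    phaseProduct q z * phaseProduct q (q * z) = (1 - q * z) / (1 - z⁻¹) := by
  have hq2 := norm_sq_lt_one hq
  have hqz' : ‖q * z⁻¹‖ < 1 := norm_mul_lt_one hq hz.le
  have hQqz := qPochhammer_eq_one_sub_mul (q * z) hq2
  have hQz := qPochhammer_eq_one_sub_mul z⁻¹ hq2
  rw [mul_comm _ (q ^ 2)] at hQqz hQz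
  have e₁ : q * (q * z) = q ^ 2 * z := by ring
  have e₂ : q ^ 2 * (q * z)⁻¹ = q * z⁻¹ := by field_simp
  have e₃ : q * (q * z)⁻¹ = z⁻¹ := by field_simp
  have hz₁ := one_sub_ne_zero_of_norm_lt_one hz
  have hA := qPochhammer_ne_zero hqz' hq2
  have hB := qPochhammer_ne_zero (norm_sq_mul_lt_one hq hqz) hq2
  have hC := qPochhammer_ne_zero (norm_mul_lt_one hq2 hz.le) hq2
  have hD := qPochhammer_ne_zero (norm_mul_lt_one hq2 hqz.le) hq2
  simp only [phaseProduct, e₁, e₂, e₃, hQqz, hQz]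
  rw [div_mul_div_comm, div_eq_div_iff (by simp [*]) hz₁]
  ring

end phaseProduct

lemma exp_mul_exp_div_eq_sin_div_sin (w c : ℂ) (h : 1 - exp (-2 * c) * exp (2 * I * w) ≠ 0) :
    exp (I * ((Real.pi / 2 : ℝ) + w)) * exp (I * ((Real.pi / 2 : ℝ) + w + I * c)) /
        ((1 - exp (-2 * c) * exp (2 * I * w)) / (1 - (exp (2 * I * w))⁻¹)) =
      sin w / sin (w + I * c) := by
  set p := exp (I * w)
  set s := exp (-c)
  have hp : p ≠ 0 := exp_ne_zero _
  have hs : s ≠ 0 := exp_ne_zero _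
  have e₁ : exp (I * ((Real.pi / 2 : ℝ) + w)) = I * p := by
    rw [mul_add, exp_add, ofReal_div, ofReal_ofNat, mul_comm I, exp_pi_div_two_mul_I]
  have e₂ : exp (I * ((Real.pi / 2 : ℝ) + w + I * c)) = I * p * s := by
    rw [← e₁, ← exp_add]
    congr 1
    linear_combination c * I_sq
  have hz : exp (2 * I * w) = p ^ 2 := by rw [← exp_nat_mul]; ring_nf
  have hq : exp (-2 * c) = s ^ 2 := by rw [← exp_nat_mul]; ring_nf
  have hsin : sin w = (p⁻¹ - p) * I / 2 := by rw [sin, neg_mul, mul_comm w I, exp_neg]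
  have hsin' : sin (w + I * c) = (p⁻¹ * s⁻¹ - p * s) * I / 2 := by
    rw [sin, ← exp_neg, ← exp_neg, ← exp_add, ← exp_add]
    congr 4
    · linear_combination (-c) * I_sq
    · linear_combination c * I_sq
  rw [hq, hz, mul_comm] at h
  rw [e₁, e₂, hz, hq, hsin, hsin']
  field_simp
  linear_combination (p ^ 2 - 1) * I_sq

/-- For `−γ < Im w < 0` the products `P(w)` and `P(w + iγ)` converge and are nonzero, and
`(e^{i(π/2 + w)}/P(w))·(e^{i(π/2 + w + iγ)}/P(w + iγ)) = sin(w)/sin(w + iγ)`, i.e. the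
dressed phase satisfies `exp(φ(x₁,x₂) + φ(x₁+iγ,x₂)) = sin(x₁−x₂)/sin(x₁−x₂+iγ)`. -/
theorem dressedPhase_functional_equation (γ : ℝ) (hγ : 0 < γ)
    (w : ℂ) (h1 : -γ < w.im) (h2 : w.im < 0) :
    Multipliable (phaseProdTerm γ w) ∧
    Multipliable (phaseProdTerm γ (w + Complex.I * (γ : ℂ))) ∧
    (∏' k : ℕ, phaseProdTerm γ w k) ≠ 0 ∧
    (∏' k : ℕ, phaseProdTerm γ (w + Complex.I * (γ : ℂ)) k) ≠ 0 ∧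
    (Complex.exp (Complex.I * ((Real.pi / 2 : ℝ) + w)) / ∏' k : ℕ, phaseProdTerm γ w k) *
      (Complex.exp (Complex.I * ((Real.pi / 2 : ℝ) + w + Complex.I * (γ : ℂ))) /
        ∏' k : ℕ, phaseProdTerm γ (w + Complex.I * (γ : ℂ)) k) =
      Complex.sin w / Complex.sin (w + Complex.I * (γ : ℂ)) := by
  set q := exp (-2 * γ)
  set z := exp (2 * I * w)
  have hq₀ : q ≠ 0 := exp_ne_zero _
  have hq : ‖q‖ < 1 := norm_exp_lt_one (by simpa using hγ)
  have hqz : ‖q * z‖ < 1 := by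
    rw [← exp_add]; exact norm_exp_lt_one (by simp; linarith)
  have hz : ‖z⁻¹‖ < 1 := by
    rw [← exp_neg]; exact norm_exp_lt_one (by simp; linarith)
  have hshift : exp (2 * I * (w + I * γ)) = q * z := by
    rw [← exp_add]; congr 1; linear_combination 2 * (γ : ℂ) * I_sq
  have hqz' : ‖q * z⁻¹‖ < 1 := norm_mul_lt_one hq hz.le
  have hqqz : ‖q * (q * z)‖ < 1 := norm_mul_lt_one hq hqz.le
  have hqqz' : ‖q * (q * z)⁻¹‖ < 1 := by rwa [mul_inv, ← mul_assoc, mul_inv_cancel₀ hq₀, one_mul]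
  have hP : HasProd (phaseProdTerm γ w) (phaseProduct q z) := by
    rw [phaseProdTerm_eq_phaseFactor]
    exact hasProd_phaseFactor hq hqz hqz'
  have hP' : HasProd (phaseProdTerm γ (w + I * γ)) (phaseProduct q (q * z)) := by
    rw [phaseProdTerm_eq_phaseFactor, hshift]
    exact hasProd_phaseFactor hq hqqz hqqz'
  rw [hP.tprod_eq, hP'.tprod_eq, div_mul_div_comm,
    phaseProduct_mul_phaseProduct_mul_left hq₀ hq hqz hz]
  exact ⟨hP.multipliable, hP'.multipliable, phaseProduct_ne_zero hq hqz hqz',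
    phaseProduct_ne_zero hq hqqz hqqz', exp_mul_exp_div_eq_sin_div_sin w γ
      (one_sub_ne_zero_of_norm_lt_one hqz)⟩
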